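/- CDF of the two-piece distribution: let f be a probability density on ℝ symmetric about 0 (f(−z) = f(z) for all z and ∫_ℝ f(z) dz = 1) with cumulative distribution function F(t) = ∫_{−∞}^t f(s) ds, and let g(· | μ, σ, a, b; f) be the two-piece density with location μ ∈ ℝ, scale σ > 0 and a, b > 0. Then the cumulative distribution function G(z) = ∫_{−∞}^z g(s | μ, σ, a, b; f) ds satisfies: G(z) = (2b/(a+b)) · F((z−μ)/(σb)) for z < μ, and G(z) = (b−a)/(a+b) + (2a/(a+b)) · F((z−μ)/(σa)) for z ≥ μ. -/

import Mathlib

/-!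
Below the mode `μ` the density is `f` rescaled by `σ b`, so the substitution `s = μ + σ b t`
gives the first formula. Symmetry of `f` gives `F 0 = 1/2`, hence mass `b/(a+b)` below `μ`;
above `μ` the same substitution with `σ a` adds `(2a/(a+b)) (F t - 1/2)`.
-/

open MeasureTheory

/-- Two-piece density with location `μ`, scale `σ`, baseline density `f`,
and parameterisation values `a`, `b`. -/
noncomputable def twoPiece (f : ℝ → ℝ) (μ σ a b : ℝ) (z : ℝ) : ℝ :=
  if z < μ then 2 / (σ * (a + b)) * f ((z - μ) / (σ * b))
  else 2 / (σ * (a + b)) * f ((z - μ) / (σ * a))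

open Set

theorem integral_Iic_comp_sub_div {E : Type*} [NormedAddCommGroup E] [NormedSpace ℝ E]
    (g : ℝ → E) (μ z : ℝ) {c : ℝ} (hc : 0 < c) :
    ∫ s in Iic z, g ((s - μ) / c) = c • ∫ t in Iic ((z - μ) / c), g t := by
  set h := (Iic ((z - μ) / c)).indicator g
  have hmem (s : ℝ) : s ∈ Iic z ↔ (s - μ) / c ∈ Iic ((z - μ) / c) := by
    simp only [mem_Iic, div_le_div_iff_of_pos_right hc, sub_le_sub_iff_right]
  rw [← integral_indicator measurableSet_Iic, ← integral_indicator measurableSet_Iic]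
  calc ∫ s, (Iic z).indicator (fun s => g ((s - μ) / c)) s
      = ∫ s, (fun t => h (t / c)) (s - μ) := by
        congr 1; ext s
        simp only [h, indicator_apply, hmem]
    _ = ∫ t, h (t / c) := integral_sub_right_eq_self (μ := volume) (fun t => h (t / c)) μ
    _ = c • ∫ t, h t := by rw [Measure.integral_comp_div, abs_of_pos hc]

theorem integral_Iic_zero_eq_half_of_even {f : ℝ → ℝ} (hf_even : ∀ x, f (-x) = f x)
    (hf : Integrable f) : ∫ x in Iic 0, f x = (∫ x, f x) / 2 := by
  have hIoi : ∫ x in Ioi 0, f x = ∫ x in Iic 0, f x := by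
    simpa only [hf_even, neg_zero] using integral_comp_neg_Ioi 0 f
  have := intervalIntegral.integral_Iic_add_Ioi hf.integrableOn hf.integrableOn (b := 0)
  linarith

section TwoPiece

variable {f : ℝ → ℝ} {μ σ a b : ℝ}

theorem twoPiece_of_lt {z : ℝ} (hz : z < μ) :
    twoPiece f μ σ a b z = 2 / (σ * (a + b)) * f ((z - μ) / (σ * b)) := if_pos hz

theorem twoPiece_of_ge {z : ℝ} (hz : μ ≤ z) :
    twoPiece f μ σ a b z = 2 / (σ * (a + b)) * f ((z - μ) / (σ * a)) := if_neg hz.not_gt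

theorem integrable_twoPiece (hf : Integrable f) (hσ : σ ≠ 0) (ha : a ≠ 0) (hb : b ≠ 0) :
    Integrable (twoPiece f μ σ a b) := by
  have piece (c : ℝ) (hc : c ≠ 0) :
      Integrable fun s => 2 / (σ * (a + b)) * f ((s - μ) / (σ * c)) :=
    ((hf.comp_div (mul_ne_zero hσ hc)).comp_sub_right μ).const_mul _
  exact Integrable.piecewise (s := Iio μ) measurableSet_Iio (piece b hb).integrableOn
    (piece a ha).integrableOn

theorem integral_Iic_twoPiece_of_le (hσ : 0 < σ) (hb : 0 < b) {z : ℝ} (hz : z ≤ μ) :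
    ∫ s in Iic z, twoPiece f μ σ a b s =
      2 * b / (a + b) * ∫ s in Iic ((z - μ) / (σ * b)), f s := by
  rw [← setIntegral_congr_set Iio_ae_eq_Iic,
    setIntegral_congr_fun measurableSet_Iio fun s hs => twoPiece_of_lt (hs.trans_le hz),
    setIntegral_congr_set Iio_ae_eq_Iic, integral_const_mul,
    integral_Iic_comp_sub_div f μ z (mul_pos hσ hb), smul_eq_mul]
  field_simp

theorem integral_Iic_twoPiece_of_ge (hf : Integrable f) (hσ : 0 < σ) (ha : 0 < a)
    (hb : 0 < b) {z : ℝ} (hz : μ ≤ z) :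
    ∫ s in Iic z, twoPiece f μ σ a b s = (∫ s in Iic μ, twoPiece f μ σ a b s) +
      2 * a / (a + b) * ((∫ s in Iic ((z - μ) / (σ * a)), f s) - ∫ s in Iic 0, f s) := by
  have hσa : 0 < σ * a := mul_pos hσ ha
  have hg := integrable_twoPiece (μ := μ) hf hσ.ne' ha.ne' hb.ne'
  have hfa : Integrable fun s => f ((s - μ) / (σ * a)) :=
    (hf.comp_div hσa.ne').comp_sub_right μ
  rw [← sub_eq_iff_eq_add',
    intervalIntegral.integral_Iic_sub_Iic hg.integrableOn hg.integrableOn,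
    intervalIntegral.integral_congr fun s hs => twoPiece_of_ge (uIcc_of_le hz ▸ hs).1,
    intervalIntegral.integral_const_mul,
    ← intervalIntegral.integral_Iic_sub_Iic hfa.integrableOn hfa.integrableOn,
    integral_Iic_comp_sub_div f μ z hσa, integral_Iic_comp_sub_div f μ μ hσa,
    sub_self, zero_div, smul_eq_mul, smul_eq_mul]
  field_simp

end TwoPiece

theorem twoPiece_cdf_general
    (f : ℝ → ℝ) (hf_symm : ∀ z, f (-z) = f z)
    (hf_int : Integrable f) (hf_dens : ∫ z, f z = 1)
    (μ σ a b : ℝ) (hσ : 0 < σ) (ha : 0 < a) (hb : 0 < b) :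
    (∀ z < μ, ∫ s in Set.Iic z, twoPiece f μ σ a b s =
        2 * b / (a + b) * ∫ s in Set.Iic ((z - μ) / (σ * b)), f s) ∧
    (∀ z ≥ μ, ∫ s in Set.Iic z, twoPiece f μ σ a b s =
        (b - a) / (a + b) + 2 * a / (a + b) * ∫ s in Set.Iic ((z - μ) / (σ * a)), f s) := by
  have hF0 : ∫ s in Iic 0, f s = 1 / 2 := by
    rw [integral_Iic_zero_eq_half_of_even hf_symm hf_int, hf_dens]
  refine ⟨fun z hz => integral_Iic_twoPiece_of_le hσ hb hz.le, fun z hz => ?_⟩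
  rw [integral_Iic_twoPiece_of_ge hf_int hσ ha hb hz,
    integral_Iic_twoPiece_of_le hσ hb le_rfl, sub_self, zero_div, hF0]
  ring

/-- The CDF of the two-piece distribution: below the mode it equals
`(2b/(a+b)) F((z-μ)/(σb))`, and above the mode it equals
`(b-a)/(a+b) + (2a/(a+b)) F((z-μ)/(σa))`, where `F` is the CDF of the baseline `f`. -/
theorem twoPiece_cdf
    (f : ℝ → ℝ) (hf_nonneg : ∀ z, 0 ≤ f z) (hf_symm : ∀ z, f (-z) = f z)
    (hf_int : Integrable f) (hf_dens : ∫ z, f z = 1)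
    (μ σ a b : ℝ) (hσ : 0 < σ) (ha : 0 < a) (hb : 0 < b) :
    (∀ z < μ, ∫ s in Set.Iic z, twoPiece f μ σ a b s =
        2 * b / (a + b) * ∫ s in Set.Iic ((z - μ) / (σ * b)), f s) ∧
    (∀ z ≥ μ, ∫ s in Set.Iic z, twoPiece f μ σ a b s =
        (b - a) / (a + b) + 2 * a / (a + b) * ∫ s in Set.Iic ((z - μ) / (σ * a)), f s) :=
  twoPiece_cdf_general f hf_symm hf_int hf_dens μ σ a b hσ ha hb
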